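/- arXiv:0705.0687 — 3 statements merged into one kernel-verified Lean document; each statement's English description precedes it below -/
import Mathlib

section
/- Let W be a vector space and A(x₁,x₂) ∈ Hom(W, W((x₁⁻¹,x₂⁻¹))). Then the formal Taylor expansion A(x₂+x₀, x₂) := (e^{x₀ ∂/∂x₁} A(x₁,x₂))|_{x₁=x₂} exists in (Hom(W, W((x₂⁻¹))))[[x₀]], and if A(x₁,x₂) ≠ 0 then A(x₂+x₀,x₂) ≠ 0. -/
/-- The generalized binomial coefficient `C(a, k) = a(a−1)⋯(a−k+1)/k!` for `a ∈ ℤ`. -/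
noncomputable def intBinom (a : ℤ) (k : ℕ) : ℂ :=
  (∏ j ∈ Finset.range k, ((a : ℂ) - (j : ℂ))) / (k.factorial : ℂ)

/-- The coefficient of `x₀^k x₂^l` in the formal Taylor expansion
`A(x₂+x₀,x₂) = Σ_{k≥0} (x₀^k/k!) ((∂/∂x₁)^k A)(x₂,x₂)`: namely
`Σ_m C(m,k) A m (l+k−m)` applied to `w`. -/
noncomputable def tayCoef {W : Type} [AddCommGroup W] [Module ℂ W]
    (A : ℤ → ℤ → Module.End ℂ W) (k : ℕ) (l : ℤ) (w : W) : W :=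
  ∑ᶠ m : ℤ, intBinom m k • A m (l + (k : ℤ) - m) w

/-- For `A(x₁,x₂) ∈ Hom(W, W((x₁⁻¹,x₂⁻¹)))` the formal Taylor expansion
`A(x₂+x₀,x₂)` exists in `(Hom(W,W((x₂⁻¹))))[[x₀]]` (each coefficient is a finite sum,
and for each power of `x₀` it is Laurent in `x₂⁻¹`), and if `A ≠ 0` then
`A(x₂+x₀,x₂) ≠ 0`. -/
theorem stmt_8 (W : Type) [AddCommGroup W] [Module ℂ W]
    (A : ℤ → ℤ → Module.End ℂ W)
    (hA : ∀ w : W, ∃ N : ℤ, ∀ m n : ℤ, (N ≤ m ∨ N ≤ n) → A m n w = 0) :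
    (∀ (k : ℕ) (l : ℤ) (w : W), {m : ℤ | intBinom m k • A m (l + (k : ℤ) - m) w ≠ 0}.Finite) ∧
    (∀ (w : W) (k : ℕ), ∃ L : ℤ, ∀ l : ℤ, L ≤ l → tayCoef A k l w = 0) ∧
    ((∃ (m n : ℤ) (w : W), A m n w ≠ 0) →
      ∃ (k : ℕ) (l : ℤ) (w : W), tayCoef A k l w ≠ 0) := by
  refine ⟨?_, ?_, ?_⟩
  · -- part 1: finiteness
    intro k l w
    obtain ⟨N, hN⟩ := hA w
    apply Set.Finite.subset (Finset.Icc (l + (k : ℤ) - N + 1) (N - 1)).finite_toSet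
    intro m hm
    simp only [Set.mem_setOf_eq] at hm
    have h1 : A m (l + (k : ℤ) - m) w ≠ 0 := fun h => hm (by rw [h, smul_zero])
    have h2 : ¬(N ≤ m ∨ N ≤ l + (k : ℤ) - m) := fun h => h1 (hN _ _ h)
    push_neg at h2
    simp only [Finset.coe_Icc, Set.mem_Icc]
    omega
  · -- part 2: Laurent in x₂
    intro w k
    obtain ⟨N, hN⟩ := hA w
    refine ⟨2 * N, fun l hl => ?_⟩
    unfold tayCoef
    apply finsum_eq_zero_of_forall_eq_zero
    intro m
    rw [hN m (l + (k : ℤ) - m) (by omega), smul_zero]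
  · -- part 3: nonvanishing
    rintro ⟨m₀, n₀, w, hw⟩
    by_contra hc
    push_neg at hc
    obtain ⟨N, hN⟩ := hA w
    set d : ℤ := m₀ + n₀ with hd
    set a : ℤ → W := fun m => A m (d - m) w with haf
    set s : Finset ℤ := Finset.Icc (d - N + 1) (N - 1) with hs
    have ha : ∀ m : ℤ, m ∉ s → a m = 0 := by
      intro m hm
      simp only [hs, Finset.mem_Icc, not_and_or, not_le] at hm
      exact hN m (d - m) (by omega)
    -- from hc: for each k, the "factorial-cleared" sums vanish
    have hk : ∀ k : ℕ, ∑ m ∈ s, (∏ j ∈ Finset.range k, ((m : ℂ) - (j : ℂ))) • a m = 0 := by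
      intro k
      have h0 : tayCoef A k (d - (k : ℤ)) w = 0 := hc k _ w
      have h1 : ∑ᶠ m : ℤ, intBinom m k • a m = 0 := by
        rw [← h0]
        unfold tayCoef
        apply finsum_congr
        intro m
        have : d - (k : ℤ) + (k : ℤ) - m = d - m := by ring
        rw [haf]
        simp only [this]
      have h2 : ∑ m ∈ s, intBinom m k • a m = 0 := by
        rw [← h1]
        exact (finsum_eq_sum_of_support_subset _ (by
          intro m hm
          simp only [Function.mem_support] at hm
          by_contra hms
          exact hm (by rw [ha m hms, smul_zero]))).symm
      have hfac : (k.factorial : ℂ) ≠ 0 := Nat.cast_ne_zero.mpr k.factorial_ne_zero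
      calc ∑ m ∈ s, (∏ j ∈ Finset.range k, ((m : ℂ) - (j : ℂ))) • a m
          = (k.factorial : ℂ) • ∑ m ∈ s, intBinom m k • a m := by
            rw [Finset.smul_sum]
            refine Finset.sum_congr rfl fun m _ => ?_
            rw [smul_smul, intBinom, mul_div_cancel₀ _ hfac]
        _ = 0 := by rw [h2, smul_zero]
    -- hence the sums vanish against every polynomial
    have hp : ∀ (n : ℕ) (p : Polynomial ℂ), p.natDegree ≤ n →
        ∑ m ∈ s, p.eval (m : ℂ) • a m = 0 := by
      intro n
      induction n with
      | zero =>
        intro p hdeg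
        obtain ⟨c, rfl⟩ := Polynomial.natDegree_eq_zero.mp (Nat.le_zero.mp hdeg)
        have h0 := hk 0
        simp only [Finset.range_zero, Finset.prod_empty, one_smul] at h0
        simp only [Polynomial.eval_C]
        rw [← Finset.smul_sum, h0, smul_zero]
      | succ n ih =>
        intro p hdeg
        by_cases hle : p.natDegree ≤ n
        · exact ih p hle
        · have hdeg' : p.natDegree = n + 1 := by omega
          have hp0 : p ≠ 0 := by
            intro h; rw [h] at hdeg'; simp at hdeg'
          set q : Polynomial ℂ :=
            ∏ j ∈ Finset.range (n + 1), (Polynomial.X - Polynomial.C (j : ℂ)) with hq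
          have hqm : q.Monic := Polynomial.monic_prod_of_monic _ _
            (fun j _ => Polynomial.monic_X_sub_C _)
          have hqdeg : q.natDegree = n + 1 := by
            rw [hq, Polynomial.natDegree_prod _ _
              (fun j _ => (Polynomial.monic_X_sub_C ((j : ℕ) : ℂ)).ne_zero)]
            rw [Finset.sum_congr rfl
              (fun j _ => Polynomial.natDegree_X_sub_C ((j : ℕ) : ℂ))]
            simp
          set c : ℂ := p.leadingCoeff with hcc
          have hcne : c ≠ 0 := Polynomial.leadingCoeff_ne_zero.mpr hp0
          set r : Polynomial ℂ := p - c • q with hr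
          have hqeval : ∀ m : ℤ, q.eval (m : ℂ) =
              ∏ j ∈ Finset.range (n + 1), ((m : ℂ) - (j : ℂ)) := by
            intro m
            rw [hq, Polynomial.eval_prod]
            exact Finset.prod_congr rfl fun j _ => by simp
          have hqsum : ∑ m ∈ s, q.eval (m : ℂ) • a m = 0 := by
            rw [← hk (n + 1)]
            exact Finset.sum_congr rfl fun m _ => by rw [hqeval]
          have hrdeg : r.natDegree ≤ n := by
            by_cases hr0 : r = 0
            · rw [hr0]; simp
            · have hcq0 : c • q ≠ 0 := smul_ne_zero hcne hqm.ne_zero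
              have hdq : p.degree = (c • q).degree := by
                rw [Polynomial.smul_eq_C_mul, Polynomial.degree_C_mul hcne,
                  Polynomial.degree_eq_natDegree hp0,
                  Polynomial.degree_eq_natDegree hqm.ne_zero, hqdeg, hdeg']
              have hlc : p.leadingCoeff = (c • q).leadingCoeff := by
                rw [Polynomial.smul_eq_C_mul, Polynomial.leadingCoeff_mul,
                  Polynomial.leadingCoeff_C, hqm.leadingCoeff, mul_one]
              have := Polynomial.degree_sub_lt hdq hp0 hlc
              rw [Polynomial.degree_eq_natDegree hp0, hdeg'] at this
              have := (Polynomial.natDegree_lt_iff_degree_lt hr0).mpr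
                (by exact_mod_cast this)
              omega
          have hrsum : ∑ m ∈ s, r.eval (m : ℂ) • a m = 0 := ih r hrdeg
          have : ∀ m : ℤ, p.eval (m : ℂ) • a m =
              r.eval (m : ℂ) • a m + c • (q.eval (m : ℂ) • a m) := by
            intro m
            rw [smul_smul, ← add_smul]
            congr 1
            rw [hr]
            simp only [Polynomial.eval_sub, Polynomial.eval_smul, smul_eq_mul]
            ring
          rw [Finset.sum_congr rfl fun m _ => this m, Finset.sum_add_distrib,
            hrsum, ← Finset.smul_sum, hqsum, smul_zero, add_zero]
    -- Lagrange interpolation kills a m₀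
    have ham : a m₀ ≠ 0 := by
      have : d - m₀ = n₀ := by omega
      rw [haf]; simpa [this] using hw
    have hm₀s : m₀ ∈ s := by by_contra h; exact ham (ha m₀ h)
    set p : Polynomial ℂ :=
      ∏ m ∈ s.erase m₀, ((Polynomial.X - Polynomial.C (m : ℂ)) *
        Polynomial.C (((m₀ - m : ℤ) : ℂ)⁻¹)) with hp'
    have hpeval : ∀ x : ℤ, p.eval (x : ℂ) =
        ∏ m ∈ s.erase m₀, (((x : ℂ) - (m : ℂ)) * ((m₀ - m : ℤ) : ℂ)⁻¹) := by
      intro x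
      rw [hp', Polynomial.eval_prod]
      exact Finset.prod_congr rfl fun m _ => by simp
    have hpm₀ : p.eval ((m₀ : ℤ) : ℂ) = 1 := by
      rw [hpeval]
      apply Finset.prod_eq_one
      intro m hm
      have hne : (m₀ - m : ℤ) ≠ 0 := by
        have := Finset.ne_of_mem_erase hm
        omega
      have : ((m₀ : ℂ) - (m : ℂ)) = ((m₀ - m : ℤ) : ℂ) := by push_cast; ring
      rw [this, mul_inv_cancel₀ (Int.cast_ne_zero.mpr hne)]
    have hpz : ∀ x ∈ s, x ≠ m₀ → p.eval ((x : ℤ) : ℂ) = 0 := by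
      intro x hx hxne
      rw [hpeval]
      apply Finset.prod_eq_zero (Finset.mem_erase.mpr ⟨hxne, hx⟩)
      simp
    have := hp (∏ m ∈ s.erase m₀, ((Polynomial.X - Polynomial.C (m : ℂ)) *
        Polynomial.C (((m₀ - m : ℤ) : ℂ)⁻¹))).natDegree p le_rfl
    rw [Finset.sum_eq_single m₀ (fun b hb hbne => by rw [hpz b hb hbne, zero_smul])
      (fun h => absurd hm₀s h)] at this
    rw [hpm₀, one_smul] at this
    exact ham this
end

section
/- Let W be a vector space, let A(x₁,x₂) ∈ Hom(W, W((x₂⁻¹))((x₁⁻¹))), B(x₁,x₂) ∈ Hom(W, W((x₁⁻¹))((x₂⁻¹))), and C(x₂,x₀) ∈ (Hom(W, W((x₂⁻¹))))((x₀)). Then the Jacobi-type identity x₀⁻¹δ((x₁−x₂)/x₀)A(x₁,x₂) − x₀⁻¹δ((x₂−x₁)/(−x₀))B(x₁,x₂) = x₂⁻¹δ((x₁−x₀)/x₂)C(x₂,x₀) holds if and only if there exist a nonnegative integer k and F(x₁,x₂) ∈ Hom(W, W((x₁⁻¹,x₂⁻¹))) such that (x₁−x₂)^k A(x₁,x₂)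 = F(x₁,x₂) = (x₁−x₂)^k B(x₁,x₂) and x₀^k C(x₂,x₀) = F(x₂+x₀, x₂). -/
set_option linter.unusedTactic false
set_option linter.unusedVariables false
set_option linter.unnecessarySeqFocus false
set_option maxHeartbeats 1000000

open Finset


lemma descPoch_eval (r : ℂ) (k : ℕ) :
    (descPochhammer ℤ k).smeval r = ∏ j ∈ Finset.range k, (r - (j:ℂ)) := by
  induction k with
  | zero => simp [descPochhammer_zero, Polynomial.smeval_one]
  | succ n ih =>
    rw [descPochhammer_succ_right, Polynomial.smeval_mul, ih, Finset.prod_range_succ]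
    congr 1
    simp [Polynomial.smeval_sub, Polynomial.smeval_X, Polynomial.smeval_natCast]

lemma intBinom_eq_choose (a : ℤ) (k : ℕ) : intBinom a k = Ring.choose ((a:ℂ)) k := by
  have h := Ring.descPochhammer_eq_factorial_smul_choose ((a:ℂ)) k
  rw [descPoch_eval] at h
  rw [intBinom, h, nsmul_eq_mul]
  field_simp [Nat.factorial_ne_zero, mul_comm]

lemma intBinom_natCast (n j : ℕ) : intBinom (n : ℤ) j = (n.choose j : ℂ) := by
  rw [intBinom_eq_choose]; push_cast; rw [Ring.choose_natCast]

lemma intBinom_zero (a : ℤ) : intBinom a 0 = 1 := by simp [intBinom]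

lemma intBinom_nat_zero {n : ℤ} {j : ℕ} (h1 : 0 ≤ n) (h2 : n < j) : intBinom n j = 0 := by
  lift n to ℕ using h1
  rw [intBinom_natCast, Nat.choose_eq_zero_of_lt (by exact_mod_cast h2), Nat.cast_zero]

lemma intBinom_vandermonde (x y : ℤ) (s : ℕ) :
    ∑ j ∈ Finset.range (s+1), intBinom x j * intBinom y (s - j) = intBinom (x + y) s := by
  have h := Ring.add_choose_eq (R := ℂ) (r := (x:ℂ)) (s := (y:ℂ)) s (Commute.all _ _)
  rw [Finset.Nat.sum_antidiagonal_eq_sum_range_succ (fun a b => Ring.choose (x:ℂ) a * Ring.choose (y:ℂ) b)] at h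
  simp only [intBinom_eq_choose]
  push_cast
  rw [h]


lemma intBinom_neg (a : ℤ) (j : ℕ) : intBinom (-a - 1) j = (-1:ℂ)^j * intBinom (a + j) j := by
  rw [intBinom, intBinom, ← mul_div_assoc]
  congr 1
  have h1 : ∏ t ∈ Finset.range j, ((((-a - 1 : ℤ)) : ℂ) - t)
      = (-1:ℂ)^j * ∏ t ∈ Finset.range j, ((a:ℂ) + 1 + t) := by
    rw [show ((-1:ℂ))^j = ∏ _t ∈ Finset.range j, (-1:ℂ) by simp, ← Finset.prod_mul_distrib]
    refine Finset.prod_congr rfl fun t _ => ?_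
    push_cast; ring
  have h2 : ∏ t ∈ Finset.range j, (((a + j : ℤ) : ℂ) - t)
      = ∏ t ∈ Finset.range j, ((a:ℂ) + 1 + t) := by
    rw [← Finset.prod_range_reflect (fun t => (a:ℂ) + 1 + t) j]
    refine Finset.prod_congr rfl fun t ht => ?_
    have ht' : t < j := Finset.mem_range.mp ht
    have : ((j - 1 - t : ℕ) : ℂ) = (j:ℂ) - 1 - t := by
      have : j - 1 - t = j - (1 + t) := by omega
      rw [this, Nat.cast_sub (by omega)]
      push_cast; ring
    rw [this]; push_cast; ring
  rw [h1, h2]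


open Finset in
lemma cauchyConv {M : Type} [AddCommMonoid M] [Module ℂ M] (u v : ℕ → ℂ) (g : ℕ → M) (N : ℕ)
    (hg : ∀ s, N ≤ s → g s = 0) :
    ∑ i ∈ range N, ∑ j ∈ range N, (u i * v j) • g (i + j)
      = ∑ s ∈ range N, (∑ j ∈ range (s + 1), u (s - j) * v j) • g s := by
  rw [← Finset.sum_product']
  rw [← Finset.sum_filter_add_sum_filter_not (range N ×ˢ range N) (fun p => p.1 + p.2 < N)]
  have h2 : ∑ p ∈ (range N ×ˢ range N).filter (fun p => ¬ p.1 + p.2 < N),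
      (u p.1 * v p.2) • g (p.1 + p.2) = 0 := by
    refine Finset.sum_eq_zero fun p hp => ?_
    rw [hg _ (by simpa using (Finset.mem_filter.mp hp).2), smul_zero]
  rw [h2, add_zero]
  have h3 : ∀ s ∈ range N, (∑ j ∈ range (s + 1), u (s - j) * v j) • g s
      = ∑ j ∈ range (s + 1), (u (s - j) * v j) • g s := fun s _ => Finset.sum_smul
  rw [Finset.sum_congr rfl h3, Finset.sum_sigma']
  refine Finset.sum_nbij' (fun p => ⟨p.1 + p.2, p.2⟩) (fun q => (q.1 - q.2, q.2)) ?_ ?_ ?_ ?_ ?_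
  · intro p hp
    simp only [Finset.mem_filter, Finset.mem_product, Finset.mem_range] at hp
    simp only [Finset.mem_sigma, Finset.mem_range]
    omega
  · intro q hq
    simp only [Finset.mem_sigma, Finset.mem_range] at hq
    simp only [Finset.mem_filter, Finset.mem_product, Finset.mem_range]
    omega
  · intro ⟨i,j⟩ hp
    simp only [Finset.mem_filter, Finset.mem_product, Finset.mem_range] at hp
    dsimp only
    rw [Prod.mk.injEq]
    constructor <;> omega
  · intro ⟨s,j⟩ hq
    simp only [Finset.mem_sigma, Finset.mem_range] at hq
    dsimp only
    simp only [Nat.sub_add_cancel (show j ≤ s by omega)]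
  · intro ⟨i,j⟩ hp
    simp only [Finset.mem_filter, Finset.mem_product, Finset.mem_range] at hp
    dsimp only
    rw [Nat.add_sub_cancel]


open Finset in
lemma shift_up {M : Type} [AddCommMonoid M] [Module ℂ M] (E : ℤ → M) (u : ℕ → ℂ)
    (α m₀ N : ℤ) (I : ℕ) (h1 : m₀ ≤ α) (h2 : N ≤ α + I) (hE : ∀ m, N ≤ m → E m = 0) :
    ∑ i ∈ range I, u i • E (α + i)
      = ∑ m ∈ Finset.Ico m₀ N, (if α ≤ m then u (m - α).toNat else 0) • E m := by
  rw [← Finset.sum_filter_add_sum_filter_not (range I) (fun i : ℕ => α + (i:ℤ) < N)]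
  have hz : ∑ i ∈ (range I).filter (fun i : ℕ => ¬ α + (i:ℤ) < N), u i • E (α + i) = 0 :=
    Finset.sum_eq_zero fun i hi => by
      rw [hE _ (by have := (Finset.mem_filter.mp hi).2; omega), smul_zero]
  rw [hz, add_zero]
  rw [← Finset.sum_filter_add_sum_filter_not (Finset.Ico m₀ N) (fun m => α ≤ m)]
  have hz2 : ∑ m ∈ (Finset.Ico m₀ N).filter (fun m => ¬ α ≤ m),
      (if α ≤ m then u (m - α).toNat else 0) • E m = 0 :=
    Finset.sum_eq_zero fun m hm => by
      rw [if_neg (Finset.mem_filter.mp hm).2, zero_smul]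
  rw [hz2, add_zero]
  refine Finset.sum_nbij' (fun i : ℕ => α + (i:ℤ)) (fun m : ℤ => (m - α).toNat) ?_ ?_ ?_ ?_ ?_
  · intro i hi
    simp only [Finset.mem_filter, Finset.mem_range] at hi
    simp only [Finset.mem_filter, Finset.mem_Ico]
    beta_reduce
    omega
  · intro m hm
    simp only [Finset.mem_filter, Finset.mem_Ico] at hm
    simp only [Finset.mem_filter, Finset.mem_range]
    beta_reduce
    omega
  · intro i hi
    simp only [Finset.mem_filter, Finset.mem_range] at hi
    beta_reduce
    omega
  · intro m hm
    simp only [Finset.mem_filter, Finset.mem_Ico] at hm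
    beta_reduce
    omega
  · intro i hi
    simp only [Finset.mem_filter, Finset.mem_range] at hi
    beta_reduce
    have h3 : ((α + (i:ℤ)) - α).toNat = i := by omega
    rw [if_pos (by omega), h3]

open Finset in
lemma shift_down {M : Type} [AddCommMonoid M] [Module ℂ M] (E : ℤ → M) (u : ℕ → ℂ)
    (α m₀ N : ℤ) (I : ℕ) (h1 : α < N) (h2 : α - I < m₀) (hE0 : ∀ m, m < m₀ → E m = 0) :
    ∑ i ∈ range I, u i • E (α - i)
      = ∑ m ∈ Finset.Ico m₀ N, (if m ≤ α then u (α - m).toNat else 0) • E m := by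
  rw [← Finset.sum_filter_add_sum_filter_not (range I) (fun i : ℕ => m₀ ≤ α - (i:ℤ))]
  have hz : ∑ i ∈ (range I).filter (fun i : ℕ => ¬ m₀ ≤ α - (i:ℤ)), u i • E (α - i) = 0 :=
    Finset.sum_eq_zero fun i hi => by
      rw [hE0 _ (by have := (Finset.mem_filter.mp hi).2; omega), smul_zero]
  rw [hz, add_zero]
  rw [← Finset.sum_filter_add_sum_filter_not (Finset.Ico m₀ N) (fun m => m ≤ α)]
  have hz2 : ∑ m ∈ (Finset.Ico m₀ N).filter (fun m => ¬ m ≤ α),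
      (if m ≤ α then u (α - m).toNat else 0) • E m = 0 :=
    Finset.sum_eq_zero fun m hm => by
      rw [if_neg (Finset.mem_filter.mp hm).2, zero_smul]
  rw [hz2, add_zero]
  refine Finset.sum_nbij' (fun i : ℕ => α - (i:ℤ)) (fun m : ℤ => (α - m).toNat) ?_ ?_ ?_ ?_ ?_
  · intro i hi
    simp only [Finset.mem_filter, Finset.mem_range] at hi
    simp only [Finset.mem_filter, Finset.mem_Ico]
    beta_reduce
    omega
  · intro m hm
    simp only [Finset.mem_filter, Finset.mem_Ico] at hm
    simp only [Finset.mem_filter, Finset.mem_range]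
    beta_reduce
    omega
  · intro i hi
    simp only [Finset.mem_filter, Finset.mem_range] at hi
    beta_reduce
    omega
  · intro m hm
    simp only [Finset.mem_filter, Finset.mem_Ico] at hm
    beta_reduce
    omega
  · intro i hi
    simp only [Finset.mem_filter, Finset.mem_range] at hi
    beta_reduce
    have h3 : (α - (α - (i:ℤ))).toNat = i := by omega
    rw [if_pos (by omega), h3]

open Finset

-- kernel computation: the convolution kernel equals the shifted kernel
lemma kernel_eq (c : ℤ) (k : ℕ) (s : ℕ) :
    (∑ j ∈ Finset.range (s+1),
      (intBinom (-c-1) (s-j) * (-1:ℂ)^(s-j)) * ((k.choose j : ℂ) * (-1:ℂ)^j))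
    = intBinom (-(c - k) - 1) s * (-1:ℂ)^s := by
  have h1 : ∀ j ∈ Finset.range (s+1),
      (intBinom (-c-1) (s-j) * (-1:ℂ)^(s-j)) * ((k.choose j : ℂ) * (-1:ℂ)^j)
      = (-1:ℂ)^s * (intBinom (-c-1) (s-j) * intBinom (k:ℤ) j) := by
    intro j hj
    rw [intBinom_natCast]
    have hjs : j ≤ s := by simpa using Nat.lt_succ_iff.mp (Finset.mem_range.mp hj)
    rw [show (-1:ℂ)^s = (-1:ℂ)^(s-j) * (-1:ℂ)^j by
      rw [← pow_add, Nat.sub_add_cancel hjs]]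
    ring
  rw [Finset.sum_congr rfl h1, ← Finset.mul_sum]
  rw [show ∑ j ∈ Finset.range (s+1), intBinom (-c-1) (s-j) * intBinom (k:ℤ) j
      = ∑ j ∈ Finset.range (s+1), intBinom (-c-1) j * intBinom (k:ℤ) (s-j) by
    rw [← Finset.sum_range_reflect]
    refine Finset.sum_congr rfl fun j hj => ?_
    have hjs : j ≤ s := by simpa using Nat.lt_succ_iff.mp (Finset.mem_range.mp hj)
    congr 2 <;> omega]
  rw [intBinom_vandermonde]
  rw [show -c-1+(k:ℤ) = -(c-k)-1 by ring]
  ring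

-- T1 : A-side shift
lemma T1 {M : Type} [AddCommGroup M] [Module ℂ M] (k : ℕ) (f D : ℤ → ℤ → M)
    (hf : ∀ m n : ℤ, f m n
      = ∑ j ∈ Finset.range (k+1), ((k.choose j : ℂ) * (-1:ℂ)^j) • D (m - k + j) (n - j))
    (M₀ : ℤ) (hD : ∀ m n : ℤ, M₀ ≤ m → D m n = 0) (c a b : ℤ) :
    ∑ᶠ i : ℕ, (intBinom (-c-1) i * (-1:ℂ)^i) • f (a+c+1+i) (b-i)
      = ∑ᶠ i : ℕ, (intBinom (-(c-k)-1) i * (-1:ℂ)^i) • D (a+(c-k)+1+i) (b-i) := by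
  set g : ℕ → M := fun s => D (a+c+1-k+s) (b-s) with hgdef
  set N : ℕ := (M₀ - (a+c+1-k)).toNat + k + 1 with hN
  have hg : ∀ s : ℕ, N ≤ s → g s = 0 := by
    intro s hs
    exact hD _ _ (by omega)
  have hgN0 : ∀ s : ℕ, (M₀ - (a+c+1-k)).toNat ≤ s → g s = 0 := by
    intro s hs
    exact hD _ _ (by omega)
  -- convert LHS finsum to finite sum over range N
  have hsupp : Function.support (fun i : ℕ => (intBinom (-c-1) i * (-1:ℂ)^i) • f (a+c+1+i) (b-i))
      ⊆ ↑(Finset.range N) := by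
    intro i hi
    simp only [Function.mem_support] at hi
    by_contra hiN
    apply hi
    have hiN' : N ≤ i := by simpa using hiN
    rw [hf]
    rw [Finset.sum_eq_zero, smul_zero]
    intro j hj
    rw [hD _ _ (by
      have hjk : j ≤ k := by simpa using Nat.lt_succ_iff.mp (Finset.mem_range.mp hj)
      omega), smul_zero]
  rw [finsum_eq_sum_of_support_subset _ hsupp]
  have hsupp2 : Function.support
      (fun i : ℕ => (intBinom (-(c-k)-1) i * (-1:ℂ)^i) • D (a+(c-k)+1+i) (b-i))
      ⊆ ↑(Finset.range N) := by
    intro i hi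
    simp only [Function.mem_support] at hi
    by_contra hiN
    apply hi
    have hiN' : N ≤ i := by simpa using hiN
    rw [hD _ _ (by omega), smul_zero]
  rw [finsum_eq_sum_of_support_subset _ hsupp2]
  -- expand f and rewrite as double sum
  have step1 : ∀ i ∈ Finset.range N, (intBinom (-c-1) i * (-1:ℂ)^i) • f (a+c+1+i) (b-i)
      = ∑ j ∈ Finset.range N,
          ((intBinom (-c-1) i * (-1:ℂ)^i) * ((k.choose j : ℂ) * (-1:ℂ)^j)) • g (i+j) := by
    intro i _
    rw [hf, Finset.smul_sum]
    rw [← Finset.sum_subset (Finset.range_subset_range.mpr (by omega : k+1 ≤ N))]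
    · refine Finset.sum_congr rfl fun j hj => ?_
      rw [smul_smul, hgdef]
      congr 2 <;> push_cast <;> ring
    · intro j _ hj
      have : k < j := by simpa using hj
      rw [Nat.choose_eq_zero_of_lt this]
      simp
  rw [Finset.sum_congr rfl step1]
  rw [cauchyConv _ _ _ _ hg]
  refine Finset.sum_congr rfl fun s _ => ?_
  rw [kernel_eq]
  congr 1
  show D (a + c + 1 - (k:ℤ) + (s:ℤ)) (b - (s:ℤ)) = _
  congr 1
  push_cast; ring

open Finset

lemma T2 {M : Type} [AddCommGroup M] [Module ℂ M] (k : ℕ) (f D : ℤ → ℤ → M)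
    (hf : ∀ m n : ℤ, f m n
      = ∑ j ∈ Finset.range (k+1), ((k.choose j : ℂ) * (-1:ℂ)^j) • D (m - k + j) (n - j))
    (N₀ : ℤ) (hD : ∀ m n : ℤ, N₀ ≤ n → D m n = 0) (c a b : ℤ) :
    ∑ᶠ i : ℕ, (intBinom (-c-1) i * (-1:ℂ)^i) • f (a-i) (b+c+1+i)
      = (-1:ℂ)^k • ∑ᶠ i : ℕ, (intBinom (-(c-k)-1) i * (-1:ℂ)^i) • D (a-i) (b+(c-k)+1+i) := by
  set g : ℕ → M := fun s => D (a-s) (b+c+1-k+s) with hgdef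
  set N : ℕ := (N₀ - (b+c+1-k)).toNat + k + 1 with hN
  have hg : ∀ s : ℕ, N ≤ s → g s = 0 := by
    intro s hs
    exact hD _ _ (by omega)
  have hsupp : Function.support (fun i : ℕ => (intBinom (-c-1) i * (-1:ℂ)^i) • f (a-i) (b+c+1+i))
      ⊆ ↑(Finset.range N) := by
    intro i hi
    simp only [Function.mem_support] at hi
    by_contra hiN
    apply hi
    have hiN' : N ≤ i := by simpa using hiN
    rw [hf, Finset.sum_eq_zero, smul_zero]
    intro j hj
    have hjk : j ≤ k := by simpa using Nat.lt_succ_iff.mp (Finset.mem_range.mp hj)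
    rw [hD _ _ (by omega), smul_zero]
  rw [finsum_eq_sum_of_support_subset _ hsupp]
  have hsupp2 : Function.support
      (fun i : ℕ => (intBinom (-(c-k)-1) i * (-1:ℂ)^i) • D (a-i) (b+(c-k)+1+i))
      ⊆ ↑(Finset.range N) := by
    intro i hi
    simp only [Function.mem_support] at hi
    by_contra hiN
    apply hi
    have hiN' : N ≤ i := by simpa using hiN
    rw [hD _ _ (by omega), smul_zero]
  rw [finsum_eq_sum_of_support_subset _ hsupp2]
  have step1 : ∀ i ∈ Finset.range N, (intBinom (-c-1) i * (-1:ℂ)^i) • f (a-i) (b+c+1+i)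
      = ∑ j ∈ Finset.range N,
          ((-1:ℂ)^k * ((intBinom (-c-1) i * (-1:ℂ)^i) * ((k.choose j : ℂ) * (-1:ℂ)^j))) • g (i+j) := by
    intro i _
    rw [hf, ← Finset.sum_range_reflect
      (fun j => ((k.choose j : ℂ) * (-1:ℂ)^j) • D (a-(i:ℤ) - k + j) (b+c+1+(i:ℤ) - j)) (k+1)]
    rw [Finset.smul_sum]
    rw [← Finset.sum_subset (Finset.range_subset_range.mpr (by omega : k+1 ≤ N))]
    · refine Finset.sum_congr rfl fun j hj => ?_
      have hjk : j ≤ k := by simpa using Nat.lt_succ_iff.mp (Finset.mem_range.mp hj)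
      have hr1 : k + 1 - 1 - j = k - j := by omega
      rw [hr1, smul_smul, Nat.choose_symm hjk]
      have hsg : ((-1:ℂ))^(k-j) = (-1)^k * (-1)^j := by
        have h2 : ((-1:ℂ))^(k-j) * (-1)^j = (-1)^k := by
          rw [← pow_add, Nat.sub_add_cancel hjk]
        calc ((-1:ℂ))^(k-j) = ((-1:ℂ))^(k-j) * ((-1)^j * (-1)^j) := by
              rw [← mul_pow]; norm_num
          _ = (-1)^k * (-1)^j := by rw [← mul_assoc, h2]
      rw [hsg]
      congr 1
      · ring
      · show D _ _ = g (i + j)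
        show D _ _ = D (a - ((i+j:ℕ):ℤ)) (b+c+1-(k:ℤ)+((i+j:ℕ):ℤ))
        congr 1 <;> push_cast [Nat.cast_sub hjk] <;> ring
    · intro j _ hj
      have : k < j := by simpa using hj
      rw [Nat.choose_eq_zero_of_lt this]
      simp
  rw [Finset.sum_congr rfl step1]
  have pull : ∑ i ∈ Finset.range N, ∑ j ∈ Finset.range N,
      ((-1:ℂ)^k * ((intBinom (-c-1) i * (-1:ℂ)^i) * ((k.choose j : ℂ) * (-1:ℂ)^j))) • g (i+j)
      = (-1:ℂ)^k • ∑ i ∈ Finset.range N, ∑ j ∈ Finset.range N,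
      ((intBinom (-c-1) i * (-1:ℂ)^i) * ((k.choose j : ℂ) * (-1:ℂ)^j)) • g (i+j) := by
    rw [Finset.smul_sum]
    refine Finset.sum_congr rfl fun i _ => ?_
    rw [Finset.smul_sum]
    refine Finset.sum_congr rfl fun j _ => ?_
    rw [smul_smul]
  rw [pull, cauchyConv _ _ _ _ hg]
  congr 1
  refine Finset.sum_congr rfl fun s _ => ?_
  rw [kernel_eq]
  congr 1
  show D (a - (s:ℤ)) (b+c+1-(k:ℤ)+(s:ℤ)) = _
  congr 1
  push_cast; ring

lemma neg_one_zpow_congr {x y : ℤ} (h : x % 2 = y % 2) : (-1:ℂ)^x = (-1:ℂ)^y := by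
  rcases Int.even_or_odd x with hx | hx
  · have hy : Even y := by
      rcases hx with ⟨t, ht⟩
      refine Int.even_iff.mpr ?_
      have : x % 2 = 0 := Int.even_iff.mp ⟨t, ht⟩
      omega
    rw [Even.neg_one_zpow hx, Even.neg_one_zpow hy]
  · have hy : Odd y := by
      have : x % 2 = 1 := Int.odd_iff.mp hx
      exact Int.odd_iff.mpr (by omega)
    rw [Odd.neg_one_zpow hx, Odd.neg_one_zpow hy]

lemma neg_one_zpow_natCast (n : ℕ) : (-1:ℂ)^((n:ℤ)) = (-1:ℂ)^n := zpow_natCast _ _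

-- choose symmetry for intBinom with natural top
lemma intBinom_symm (n j i : ℕ) (h : j + i = n) : intBinom (n:ℤ) j = intBinom (n:ℤ) i := by
  rw [intBinom_natCast, intBinom_natCast]
  have : n - i = j := by omega
  rw [← this, Nat.choose_symm (by omega)]

lemma diamond (c a m : ℤ) :
    (if a+c+1 ≤ m then intBinom (-c-1) (m-a-c-1).toNat * (-1:ℂ)^(m-a-c-1).toNat else 0)
    - (-1:ℂ)^(c+1) * (if m ≤ a then intBinom (-c-1) (a-m).toNat * (-1:ℂ)^(a-m).toNat else 0)
    = (if 0 ≤ c then intBinom (m-a-1) c.toNat else 0) := by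
  by_cases hc : 0 ≤ c
  · rw [if_pos hc]
    by_cases h1 : a+c+1 ≤ m
    · rw [if_pos h1, if_neg (by omega)]
      set j : ℕ := (m-a-c-1).toNat with hj
      have hjz : (j:ℤ) = m-a-c-1 := by omega
      have hneg : intBinom (-c-1) j = (-1:ℂ)^j * intBinom (c+j) j := intBinom_neg c j
      rw [hneg]
      have hcj : (c + (j:ℤ)) = ((c.toNat + j : ℕ) : ℤ) := by omega
      have hma : (m - a - 1) = ((c.toNat + j : ℕ) : ℤ) := by omega
      rw [hcj, hma, intBinom_symm _ j c.toNat (by omega)]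
      have : ((-1:ℂ)^j * intBinom ((c.toNat + j : ℕ):ℤ) c.toNat) * (-1:ℂ)^j
          = intBinom ((c.toNat + j : ℕ):ℤ) c.toNat * ((-1:ℂ)^j * (-1:ℂ)^j) := by ring
      rw [this, ← mul_pow]
      norm_num
    · by_cases h2 : m ≤ a
      · rw [if_neg h1, if_pos h2]
        set j : ℕ := (a-m).toNat with hj
        have hjz : (j:ℤ) = a-m := by omega
        rw [intBinom_neg c j]
        have hma : (m - a - 1) = -(j:ℤ)-1 := by omega
        rw [hma, intBinom_neg (j:ℤ) c.toNat]
        have hcj : (c + (j:ℤ)) = (((c.toNat + j : ℕ)) : ℤ) := by omega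
        have hjc : ((j:ℤ) + c.toNat) = (((c.toNat + j : ℕ)) : ℤ) := by omega
        rw [hcj, hjc, intBinom_symm _ j c.toNat (by omega)]
        have hsign : (-1:ℂ)^(c+1) = (-1:ℂ)^(c.toNat) * (-1) := by
          rw [show (c+1 : ℤ) = (c.toNat : ℤ) + 1 by omega, zpow_add₀ (by norm_num),
            neg_one_zpow_natCast]
          norm_num
        rw [hsign]
        ring_nf
        rw [show ((-1:ℂ))^(j*2) = ((-1:ℂ)^2)^j by rw [← pow_mul, Nat.mul_comm 2 j]]
        norm_num
      · rw [if_neg h1, if_neg h2]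
        have hm1 : 0 ≤ m - a - 1 := by omega
        have hm2 : m - a - 1 < c := by omega
        rw [intBinom_nat_zero hm1 (by omega)]
        norm_num
  · rw [if_neg hc]
    have hK : (-c-1) = (((-c-1).toNat : ℕ) : ℤ) := by omega
    set K : ℕ := (-c-1).toNat with hKdef
    by_cases h1 : a+c+1 ≤ m
    · by_cases h2 : m ≤ a
      · rw [if_pos h1, if_pos h2]
        set j₁ : ℕ := (m-a-c-1).toNat with hj1
        set j₂ : ℕ := (a-m).toNat with hj2
        have hsum : j₁ + j₂ = K := by omega
        rw [hK, intBinom_symm K j₁ j₂ hsum]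
        have hsign : (-1:ℂ)^(c+1) * (-1:ℂ)^(j₂) = (-1:ℂ)^(j₁) := by
          rw [← neg_one_zpow_natCast j₂, ← neg_one_zpow_natCast j₁, ← zpow_add₀ (by norm_num : (-1:ℂ) ≠ 0)]
          exact neg_one_zpow_congr (by omega)
        calc intBinom (K:ℤ) j₂ * (-1:ℂ)^j₁ - (-1:ℂ)^(c+1) * (intBinom (K:ℤ) j₂ * (-1:ℂ)^j₂)
            = intBinom (K:ℤ) j₂ * ((-1:ℂ)^j₁ - (-1:ℂ)^(c+1) * (-1:ℂ)^j₂) := by ring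
          _ = 0 := by rw [hsign]; ring
      · rw [if_pos h1, if_neg h2]
        set j₁ : ℕ := (m-a-c-1).toNat with hj1
        rw [hK, intBinom_nat_zero (by omega) (by omega)]
        norm_num
    · rw [if_neg h1, if_pos (by omega)]
      rw [hK, intBinom_nat_zero (by omega) (by omega)]
      norm_num

open Finset

lemma delta3 {M : Type} [AddCommGroup M] [Module ℂ M] (f : ℤ → ℤ → M) (N : ℤ)
    (hf : ∀ m n : ℤ, (N ≤ m ∨ N ≤ n) → f m n = 0) (c a b : ℤ) :
    (∑ᶠ i : ℕ, (intBinom (-c-1) i * (-1:ℂ)^i) • f (a+c+1+i) (b-i))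
      - (-1:ℂ)^(c+1) • (∑ᶠ i : ℕ, (intBinom (-c-1) i * (-1:ℂ)^i) • f (a-i) (b+c+1+i))
    = ∑ᶠ i : ℕ, (intBinom (a+i) i * (-1:ℂ)^i) •
        (if 0 ≤ c - i then
          (∑ᶠ m : ℤ, intBinom m (c-i).toNat • f m ((a+b+1+i) + (c-i) - m)) else 0) := by
  set S : ℤ := a+b+c+1 with hS
  set E : ℤ → M := fun m => f m (S-m) with hE
  set lo : ℤ := min (S-N+1) (min a (a+c+1)) with hlo
  set hi : ℤ := max N (max (a+1) (a+c+2)) with hhi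
  have hEhi : ∀ m, hi ≤ m → E m = 0 := fun m hm => hf _ _ (Or.inl (by omega))
  have hElo : ∀ m, m < lo → E m = 0 := fun m hm => hf _ _ (Or.inr (by omega))
  set u : ℕ → ℂ := fun i => intBinom (-c-1) i * (-1:ℂ)^i with hu
  set I₁ : ℕ := (hi - (a+c+1)).toNat with hI1
  set I₂ : ℕ := (a - lo + 1).toNat with hI2
  -- term 1
  have ht1 : (∑ᶠ i : ℕ, u i • f (a+c+1+i) (b-i))
      = ∑ m ∈ Finset.Ico lo hi, (if a+c+1 ≤ m then u (m - (a+c+1)).toNat else 0) • E m := by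
    have hsupp : Function.support (fun i : ℕ => u i • f (a+c+1+i) (b-i)) ⊆ ↑(range I₁) := by
      intro i hi2
      simp only [Function.mem_support] at hi2
      by_contra hiN
      exact hi2 (by rw [hf _ _ (Or.inl (by simp only [Finset.coe_range, Set.mem_Iio] at hiN; omega)), smul_zero])
    rw [finsum_eq_sum_of_support_subset _ hsupp]
    have := shift_up E u (a+c+1) lo hi I₁ (by omega) (by omega) hEhi
    rw [← this]
    refine Finset.sum_congr rfl fun i _ => ?_
    congr 1
    show f (a+c+1+i) (b-i) = f (a+c+1+i) (S - (a+c+1+i))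
    congr 1
    omega
  -- term 2
  have ht2 : (∑ᶠ i : ℕ, u i • f (a-i) (b+c+1+i))
      = ∑ m ∈ Finset.Ico lo hi, (if m ≤ a then u (a - m).toNat else 0) • E m := by
    have hsupp : Function.support (fun i : ℕ => u i • f (a-i) (b+c+1+i)) ⊆ ↑(range I₂) := by
      intro i hi2
      simp only [Function.mem_support] at hi2
      by_contra hiN
      exact hi2 (by rw [hf _ _ (Or.inr (by simp only [Finset.coe_range, Set.mem_Iio] at hiN; omega)), smul_zero])
    rw [finsum_eq_sum_of_support_subset _ hsupp]
    have := shift_down E u a lo hi I₂ (by omega) (by omega) hElo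
    rw [← this]
    refine Finset.sum_congr rfl fun i _ => ?_
    congr 1
    show f (a-i) (b+c+1+i) = f (a-i) (S - (a-i))
    congr 1
    omega
  -- term 3
  have ht3 : (∑ᶠ i : ℕ, (intBinom (a+i) i * (-1:ℂ)^i) •
        (if 0 ≤ c - i then
          (∑ᶠ m : ℤ, intBinom m (c-i).toNat • f m ((a+b+1+i) + (c-i) - m)) else 0))
      = ∑ m ∈ Finset.Ico lo hi, (if 0 ≤ c then intBinom (m-a-1) c.toNat else 0) • E m := by
    have hsupp : Function.support (fun i : ℕ => (intBinom (a+i) i * (-1:ℂ)^i) •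
        (if 0 ≤ c - i then
          (∑ᶠ m : ℤ, intBinom m (c-i).toNat • f m ((a+b+1+i) + (c-i) - m)) else 0))
        ⊆ ↑(range (c.toNat + 1)) := by
      intro i hi2
      simp only [Function.mem_support] at hi2
      by_contra hiN
      apply hi2
      rw [if_neg (by simp only [Finset.coe_range, Set.mem_Iio] at hiN; omega), smul_zero]
    rw [finsum_eq_sum_of_support_subset _ hsupp]
    have hinner : ∀ i : ℕ, (i:ℤ) ≤ c →
        (∑ᶠ m : ℤ, intBinom m (c-i).toNat • f m ((a+b+1+i) + (c-i) - m))
        = ∑ m ∈ Finset.Ico lo hi, intBinom m (c-i).toNat • E m := by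
      intro i hic
      have hsupp2 : Function.support (fun m : ℤ => intBinom m (c-i).toNat • f m ((a+b+1+i) + (c-i) - m))
          ⊆ ↑(Finset.Ico lo hi) := by
        intro m hm
        simp only [Function.mem_support] at hm
        simp only [Finset.coe_Ico, Set.mem_Ico]
        constructor
        · by_contra hx
          exact hm (by rw [hf _ _ (Or.inr (by omega)), smul_zero])
        · by_contra hx
          exact hm (by rw [hf _ _ (Or.inl (by omega)), smul_zero])
      rw [finsum_eq_sum_of_support_subset _ hsupp2]
      refine Finset.sum_congr rfl fun m _ => ?_
      congr 1
      show f m ((a+b+1+i) + (c-i) - m) = f m (S - m)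
      congr 1
      omega
    have hmain : ∀ i ∈ range (c.toNat+1), (intBinom (a+i) i * (-1:ℂ)^i) •
        (if 0 ≤ c - i then
          (∑ᶠ m : ℤ, intBinom m (c-i).toNat • f m ((a+b+1+i) + (c-i) - m)) else 0)
        = ∑ m ∈ Finset.Ico lo hi,
            (if 0 ≤ c - i then (intBinom (a+i) i * (-1:ℂ)^i) * intBinom m (c-i).toNat else 0) • E m := by
      intro i hi2
      by_cases hic : 0 ≤ c - (i:ℤ)
      · rw [if_pos hic, hinner i (by omega), Finset.smul_sum]
        refine Finset.sum_congr rfl fun m _ => ?_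
        rw [if_pos hic, smul_smul]
      · rw [if_neg hic, smul_zero]
        rw [Finset.sum_eq_zero]
        intro m _
        rw [if_neg hic, zero_smul]
    rw [Finset.sum_congr rfl hmain, Finset.sum_comm]
    refine Finset.sum_congr rfl fun m _ => ?_
    rw [← Finset.sum_smul]
    congr 1
    -- kernel identity
    by_cases hc : 0 ≤ c
    · rw [if_pos hc]
      have hx : ∀ i ∈ range (c.toNat+1),
          (if 0 ≤ c - (i:ℤ) then (intBinom (a+i) i * (-1:ℂ)^i) * intBinom m (c-i).toNat else 0)
          = intBinom (-a-1) i * intBinom m (c.toNat - i) := by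
        intro i hi2
        have hi3 : i ≤ c.toNat := by simpa using Nat.lt_succ_iff.mp (Finset.mem_range.mp hi2)
        rw [if_pos (by omega)]
        have h4 : intBinom (-a-1) i = (-1:ℂ)^i * intBinom (a+i) i := intBinom_neg a i
        have h5 : (c - (i:ℤ)).toNat = c.toNat - i := by omega
        rw [h5, h4]
        ring
      rw [Finset.sum_congr rfl hx, intBinom_vandermonde (-a-1) m c.toNat]
      congr 1
      omega
    · rw [if_neg hc]
      rw [Finset.sum_eq_zero]
      intro i _
      rw [if_neg (by omega)]
  rw [ht1, ht2, ht3, Finset.smul_sum, ← Finset.sum_sub_distrib]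
  refine Finset.sum_congr rfl fun m _ => ?_
  rw [smul_smul, ← sub_smul]
  congr 1
  have hd := diamond c a m
  have e1 : (if a+c+1 ≤ m then u (m - (a+c+1)).toNat else 0)
      = (if a+c+1 ≤ m then intBinom (-c-1) (m-a-c-1).toNat * (-1:ℂ)^(m-a-c-1).toNat else 0) := by
    by_cases h1 : a+c+1 ≤ m
    · rw [show m - (a+c+1) = m-a-c-1 from by ring, if_pos h1, hu]
    · rw [if_neg h1, if_neg h1]
  have e2 : (if m ≤ a then u (a-m).toNat else 0)
      = (if m ≤ a then intBinom (-c-1) (a-m).toNat * (-1:ℂ)^(a-m).toNat else 0) := by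
    by_cases h2 : m ≤ a
    · rw [if_pos h2, hu]
    · rw [if_neg h2]
  rw [e1, e2, hd]

open Finset

lemma inversion {M : Type} [AddCommGroup M] [Module ℂ M] (H : ℤ → ℤ → M)
    (hneg : ∀ c : ℤ, c < 0 → ∀ l : ℤ, H c l = 0)
    (hS : ∀ c a b : ℤ, (∑ᶠ i : ℕ, (intBinom (a+i) i * (-1:ℂ)^i) • H (c-i) (a+b+1+i)) = 0) :
    ∀ c l : ℤ, H c l = 0 := by
  intro c l
  by_cases hc : c < 0
  · exact hneg c hc l
  push_neg at hc
  set a : ℤ := l - 1 with ha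
  set b : ℤ := 0 with hb
  set N : ℕ := c.toNat + 1 with hN
  set g : ℕ → M := fun s => H (c-s) (l+s) with hg
  have hgz : ∀ s : ℕ, N ≤ s → g s = 0 := fun s hs => hneg _ (by omega) _
  set u : ℕ → ℂ := fun i => intBinom (-a-1) i with hu
  set v : ℕ → ℂ := fun j => intBinom (a+1) j with hv
  have key : ∑ j ∈ range N, v j • (∑ᶠ i : ℕ, (intBinom (a+i) i * (-1:ℂ)^i) • H ((c-j)-i) (a+(b+j)+1+i))
      = H c l := by
    have step1 : ∀ j ∈ range N, v j • (∑ᶠ i : ℕ, (intBinom (a+i) i * (-1:ℂ)^i) • H ((c-j)-i) (a+(b+j)+1+i))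
        = ∑ i ∈ range N, (u i * v j) • g (i+j) := by
      intro j hj
      have hsupp : Function.support (fun i : ℕ => (intBinom (a+i) i * (-1:ℂ)^i) • H ((c-j)-i) (a+(b+j)+1+i))
          ⊆ ↑(range N) := by
        intro i hi2
        simp only [Function.mem_support] at hi2
        by_contra hiN
        apply hi2
        rw [hneg _ (by simp only [Finset.coe_range, Set.mem_Iio] at hiN; omega), smul_zero]
      rw [finsum_eq_sum_of_support_subset _ hsupp, Finset.smul_sum]
      refine Finset.sum_congr rfl fun i _ => ?_
      rw [smul_smul]
      have hcoef : intBinom (a+(i:ℤ)) i * (-1:ℂ)^i = u i := by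
        rw [hu]; dsimp only; rw [intBinom_neg a i]; ring
      rw [← hcoef]
      rw [show v j * (intBinom (a+(i:ℤ)) i * (-1:ℂ)^i) = (intBinom (a+(i:ℤ)) i * (-1:ℂ)^i) * v j from by ring]
      congr 1
      show H ((c-j)-i) (a+(b+j)+1+i) = H (c-((i+j:ℕ):ℤ)) (l+((i+j:ℕ):ℤ))
      congr 1 <;> push_cast <;> omega
    rw [Finset.sum_congr rfl step1, Finset.sum_comm, cauchyConv u v g N hgz]
    have hker : ∀ s ∈ range N, (∑ j ∈ range (s+1), u (s-j) * v j) • g s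
        = (if s = 0 then (1:ℂ) else 0) • g s := by
      intro s _
      congr 1
      have : ∑ j ∈ range (s+1), u (s-j) * v j = ∑ j ∈ range (s+1), u j * v (s-j) := by
        rw [← Finset.sum_range_reflect]
        refine Finset.sum_congr rfl fun j hj => ?_
        have hjs : j ≤ s := by simpa using Nat.lt_succ_iff.mp (Finset.mem_range.mp hj)
        congr 2 <;> omega
      rw [this, hu, hv]
      dsimp only
      rw [intBinom_vandermonde (-a-1) (a+1) s]
      rw [show (-a-1)+(a+1) = (0:ℤ) by ring]
      by_cases hs : s = 0
      · rw [if_pos hs, hs, intBinom_zero]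
      · rw [if_neg hs, intBinom_nat_zero (le_refl (0:ℤ)) (by omega)]
    rw [Finset.sum_congr rfl hker]
    rw [Finset.sum_eq_single 0]
    · rw [if_pos rfl, one_smul]
      show H (c - (0:ℕ)) (l + (0:ℕ)) = H c l
      norm_num
    · intro s _ hs
      rw [if_neg hs, zero_smul]
    · intro h0
      exact absurd (Finset.mem_range.mpr (by omega)) h0
  have hzero : ∑ j ∈ range N, v j • (∑ᶠ i : ℕ, (intBinom (a+i) i * (-1:ℂ)^i) • H ((c-j)-i) (a+(b+j)+1+i))
      = 0 := by
    refine Finset.sum_eq_zero fun j _ => ?_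
    rw [hS (c-j) a (b+j), smul_zero]
  rw [← key, hzero]

open Finset

lemma zp_shift (c : ℤ) (k : ℕ) : (-1:ℂ)^(c+1) * (-1:ℂ)^k = (-1:ℂ)^((c+k)+1) := by
  rw [show ((-1:ℂ))^k = ((-1:ℂ))^((k:ℕ):ℤ) from (zpow_natCast _ _).symm,
    ← zpow_add₀ (by norm_num : (-1:ℂ) ≠ 0)]
  exact neg_one_zpow_congr (by omega)

lemma zp_shift' (c : ℤ) (k : ℕ) : (-1:ℂ)^(c+1) * (-1:ℂ)^k = (-1:ℂ)^((c-k)+1) := by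
  rw [show ((-1:ℂ))^k = ((-1:ℂ))^((k:ℕ):ℤ) from (zpow_natCast _ _).symm,
    ← zpow_add₀ (by norm_num : (-1:ℂ) ≠ 0)]
  exact neg_one_zpow_congr (by omega)

lemma finsum_nat_coeff {M : Type} [AddCommGroup M] [Module ℂ M] (k : ℕ) (h : ℕ → M) :
    ∑ᶠ i : ℕ, (intBinom (k:ℤ) i * (-1:ℂ)^i) • h i
      = ∑ i ∈ range (k+1), ((k.choose i : ℂ) * (-1:ℂ)^i) • h i := by
  have hsupp : Function.support (fun i : ℕ => (intBinom (k:ℤ) i * (-1:ℂ)^i) • h i)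
      ⊆ ↑(range (k+1)) := by
    intro i hi
    simp only [Function.mem_support] at hi
    by_contra hiN
    apply hi
    rw [intBinom_nat_zero (by omega) (by simp only [Finset.coe_range, Set.mem_Iio] at hiN; exact_mod_cast by omega)]
    simp
  rw [finsum_eq_sum_of_support_subset _ hsupp]
  refine Finset.sum_congr rfl fun i _ => ?_
  rw [intBinom_natCast]

open Finset

-- the backward direction, pointwise over w (working with plain functions into M)
lemma backward_pt {M : Type} [AddCommGroup M] [Module ℂ M]
    (Aw Bw Cw Fw : ℤ → ℤ → M) (k : ℕ)
    (hAt : ∃ M₀ : ℤ, ∀ m n : ℤ, M₀ ≤ m → Aw m n = 0)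
    (hBt : ∃ N₀ : ℤ, ∀ m n : ℤ, N₀ ≤ n → Bw m n = 0)
    (hFt : ∃ N : ℤ, ∀ m n : ℤ, (N ≤ m ∨ N ≤ n) → Fw m n = 0)
    (hFA : ∀ a b : ℤ,
      (∑ j ∈ Finset.range (k + 1), ((k.choose j : ℂ) * (-1 : ℂ) ^ j) • Aw (a - k + j) (b - j)) = Fw a b)
    (hFB : ∀ a b : ℤ,
      (∑ j ∈ Finset.range (k + 1), ((k.choose j : ℂ) * (-1 : ℂ) ^ j) • Bw (a - k + j) (b - j)) = Fw a b)
    (hC4 : ∀ (c : ℕ) (l : ℤ),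
      Cw ((c : ℤ) - k) l = ∑ᶠ m : ℤ, intBinom m c • Fw m (l + (c : ℤ) - m))
    (hC5 : ∀ c : ℤ, c < 0 → ∀ l : ℤ, Cw (c - k) l = 0)
    (c a b : ℤ) :
    (∑ᶠ i : ℕ, (intBinom (-c - 1) i * (-1 : ℂ) ^ i) • Aw (a + c + 1 + i) (b - i))
        - (-1 : ℂ) ^ (c + 1) •
            (∑ᶠ i : ℕ, (intBinom (-c - 1) i * (-1 : ℂ) ^ i) • Bw (a - i) (b + c + 1 + i))
      = ∑ᶠ i : ℕ, (intBinom (a + i) i * (-1 : ℂ) ^ i) • Cw (c - i) (a + b + 1 + i) := by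
  obtain ⟨M₀, hA⟩ := hAt
  obtain ⟨N₀, hB⟩ := hBt
  obtain ⟨N, hF⟩ := hFt
  -- T1 at c+k
  have h1 := T1 k Fw Aw (fun m n => (hFA m n).symm) M₀ hA (c+k) a b
  have h2 := T2 k Fw Bw (fun m n => (hFB m n).symm) N₀ hB (c+k) a b
  have h3 := delta3 Fw N hF (c+k) a b
  -- rewrite h1 : LHS₁ = S_A with kernel -(c+k-k)-1 etc.
  have e1 : (∑ᶠ i : ℕ, (intBinom (-(c+k-k)-1) i * (-1:ℂ)^i) • Aw (a+(c+k-k)+1+i) (b-i))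
      = ∑ᶠ i : ℕ, (intBinom (-c-1) i * (-1:ℂ)^i) • Aw (a+c+1+i) (b-i) := by
    apply finsum_congr
    intro i
    rw [show -((c:ℤ)+k-k)-1 = -c-1 by ring, show a+((c:ℤ)+k-k)+1+(i:ℤ) = a+c+1+i by ring]
  have e2 : (∑ᶠ i : ℕ, (intBinom (-(c+k-k)-1) i * (-1:ℂ)^i) • Bw (a-i) (b+(c+k-k)+1+i))
      = ∑ᶠ i : ℕ, (intBinom (-c-1) i * (-1:ℂ)^i) • Bw (a-i) (b+c+1+i) := by
    apply finsum_congr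
    intro i
    rw [show -((c:ℤ)+k-k)-1 = -c-1 by ring, show b+((c:ℤ)+k-k)+1+(i:ℤ) = b+c+1+i by ring]
  rw [show (c:ℤ)+k-k = c+(k:ℤ)-k by ring] at e1 e2
  rw [e1] at h1
  rw [e2] at h2
  -- relate delta3's RHS with S_C
  have e3 : (∑ᶠ i : ℕ, (intBinom (a+i) i * (-1:ℂ)^i) •
        (if 0 ≤ (c+k) - i then
          (∑ᶠ m : ℤ, intBinom m ((c+k) - i).toNat • Fw m ((a+b+1+i) + ((c+k) - i) - m)) else 0))
      = ∑ᶠ i : ℕ, (intBinom (a + i) i * (-1 : ℂ) ^ i) • Cw (c - i) (a + b + 1 + i) := by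
    apply finsum_congr
    intro i
    congr 1
    by_cases hci : 0 ≤ (c:ℤ) + k - i
    · rw [if_pos hci]
      have hc' : ((((c+(k:ℤ)-i).toNat : ℕ)) : ℤ) = c + k - i := by omega
      have := hC4 (c+(k:ℤ)-i).toNat (a+b+1+i)
      rw [hc'] at this
      rw [show c - (i:ℤ) = c + k - i - k by ring, ← this]
    · rw [if_neg hci]
      have := hC5 (c+(k:ℤ)-i) (by omega) (a+b+1+i)
      rw [show c - (i:ℤ) = c + k - i - k by ring, this]
  rw [← e3, ← h3, h1]
  congr 1
  rw [h2, smul_smul]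
  congr 1
  rw [show ((-1:ℂ))^k = ((-1:ℂ))^((k:ℕ):ℤ) from (zpow_natCast _ _).symm,
    ← zpow_add₀ (by norm_num : (-1:ℂ) ≠ 0)]
  exact neg_one_zpow_congr (by omega)

open Finset

lemma SG_eq {M : Type} [AddCommGroup M] [Module ℂ M] (Aw Bw Fw : ℤ → ℤ → M) (k : ℕ)
    (hAt : ∃ M₀ : ℤ, ∀ m n : ℤ, M₀ ≤ m → Aw m n = 0)
    (hBt : ∃ N₀ : ℤ, ∀ m n : ℤ, N₀ ≤ n → Bw m n = 0)
    (hFt : ∃ N : ℤ, ∀ m n : ℤ, (N ≤ m ∨ N ≤ n) → Fw m n = 0)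
    (hFA : ∀ a b : ℤ,
      (∑ j ∈ Finset.range (k + 1), ((k.choose j : ℂ) * (-1 : ℂ) ^ j) • Aw (a - k + j) (b - j)) = Fw a b)
    (hFB : ∀ a b : ℤ,
      (∑ j ∈ Finset.range (k + 1), ((k.choose j : ℂ) * (-1 : ℂ) ^ j) • Bw (a - k + j) (b - j)) = Fw a b)
    (c a b : ℤ) :
    (∑ᶠ i : ℕ, (intBinom (a+i) i * (-1:ℂ)^i) •
        (if 0 ≤ c - i then
          (∑ᶠ m : ℤ, intBinom m (c-i).toNat • Fw m ((a+b+1+i) + (c-i) - m)) else 0))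
    = (∑ᶠ i : ℕ, (intBinom (-(c-k)-1) i * (-1:ℂ)^i) • Aw (a+(c-k)+1+i) (b-i))
      - (-1:ℂ)^((c-k)+1) •
          (∑ᶠ i : ℕ, (intBinom (-(c-k)-1) i * (-1:ℂ)^i) • Bw (a-i) (b+(c-k)+1+i)) := by
  obtain ⟨M₀, hA⟩ := hAt
  obtain ⟨N₀, hB⟩ := hBt
  obtain ⟨N, hF⟩ := hFt
  have h1 := T1 k Fw Aw (fun m n => (hFA m n).symm) M₀ hA c a b
  have h2 := T2 k Fw Bw (fun m n => (hFB m n).symm) N₀ hB c a b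
  have h3 := delta3 Fw N hF c a b
  rw [← h3, h1, h2, smul_smul, zp_shift' c k]

lemma forward_C4 {M : Type} [AddCommGroup M] [Module ℂ M] (Aw Bw Cw Fw : ℤ → ℤ → M) (k : ℕ)
    (hAt : ∃ M₀ : ℤ, ∀ m n : ℤ, M₀ ≤ m → Aw m n = 0)
    (hBt : ∃ N₀ : ℤ, ∀ m n : ℤ, N₀ ≤ n → Bw m n = 0)
    (hFt : ∃ N : ℤ, ∀ m n : ℤ, (N ≤ m ∨ N ≤ n) → Fw m n = 0)
    (hFA : ∀ a b : ℤ,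
      (∑ j ∈ Finset.range (k + 1), ((k.choose j : ℂ) * (-1 : ℂ) ^ j) • Aw (a - k + j) (b - j)) = Fw a b)
    (hFB : ∀ a b : ℤ,
      (∑ j ∈ Finset.range (k + 1), ((k.choose j : ℂ) * (-1 : ℂ) ^ j) • Bw (a - k + j) (b - j)) = Fw a b)
    (hCneg : ∀ c : ℤ, c < 0 → ∀ l : ℤ, Cw (c - k) l = 0)
    (hJ : ∀ (c a b : ℤ),
      (∑ᶠ i : ℕ, (intBinom (-c - 1) i * (-1 : ℂ) ^ i) • Aw (a + c + 1 + i) (b - i))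
        - (-1 : ℂ) ^ (c + 1) •
            (∑ᶠ i : ℕ, (intBinom (-c - 1) i * (-1 : ℂ) ^ i) • Bw (a - i) (b + c + 1 + i))
        = ∑ᶠ i : ℕ, (intBinom (a + i) i * (-1 : ℂ) ^ i) • Cw (c - i) (a + b + 1 + i)) :
    ∀ c l : ℤ, Cw (c - k) l
      = (if 0 ≤ c then (∑ᶠ m : ℤ, intBinom m c.toNat • Fw m (l + c - m)) else 0) := by
  set H : ℤ → ℤ → M := fun c' l' => Cw (c' - k) l'
      - (if 0 ≤ c' then (∑ᶠ m : ℤ, intBinom m c'.toNat • Fw m (l' + c' - m)) else 0) with hH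
  have hneg : ∀ c' : ℤ, c' < 0 → ∀ l' : ℤ, H c' l' = 0 := by
    intro c' hc' l'
    rw [hH]
    dsimp only
    rw [hCneg c' hc' l', if_neg (by omega), sub_zero]
  have hSH : ∀ c' a b : ℤ,
      (∑ᶠ i : ℕ, (intBinom (a+i) i * (-1:ℂ)^i) • H (c'-i) (a+b+1+i)) = 0 := by
    intro c' a b
    have hsplit : ∀ i : ℕ, (intBinom (a+i) i * (-1:ℂ)^i) • H (c'-i) (a+b+1+i)
        = (intBinom (a+i) i * (-1:ℂ)^i) • Cw ((c'-i) - k) (a+b+1+i)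
          - (intBinom (a+i) i * (-1:ℂ)^i) •
            (if 0 ≤ c'-i then (∑ᶠ m : ℤ, intBinom m (c'-i).toNat • Fw m ((a+b+1+i) + (c'-i) - m)) else 0) := by
      intro i
      rw [hH]
      dsimp only
      rw [smul_sub]
    rw [finsum_congr hsplit]
    have hsupC : (Function.support (fun i : ℕ =>
        (intBinom (a+i) i * (-1:ℂ)^i) • Cw ((c'-i) - k) (a+b+1+i))).Finite := by
      apply Set.Finite.subset (Finset.finite_toSet (range (c'.toNat + 1)))
      intro i hi
      simp only [Function.mem_support] at hi
      by_contra hiN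
      apply hi
      rw [hCneg (c'-i) (by simp only [Finset.coe_range, Set.mem_Iio] at hiN; omega) _, smul_zero]
    have hsupG : (Function.support (fun i : ℕ =>
        (intBinom (a+i) i * (-1:ℂ)^i) •
          (if 0 ≤ c'-i then (∑ᶠ m : ℤ, intBinom m (c'-i).toNat • Fw m ((a+b+1+i) + (c'-i) - m)) else 0))).Finite := by
      apply Set.Finite.subset (Finset.finite_toSet (range (c'.toNat + 1)))
      intro i hi
      simp only [Function.mem_support] at hi
      by_contra hiN
      apply hi
      rw [if_neg (by simp only [Finset.coe_range, Set.mem_Iio] at hiN; omega), smul_zero]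
    rw [finsum_sub_distrib hsupC hsupG]
    rw [SG_eq Aw Bw Fw k hAt hBt hFt hFA hFB c' a b]
    rw [hJ (c'-k) a b]
    rw [sub_eq_zero]
    apply finsum_congr
    intro i
    rw [show (c':ℤ) - k - i = (c' - i) - k by ring]
  have hzero := inversion H hneg hSH
  intro c l
  have := hzero c l
  rw [hH] at this
  dsimp only at this
  exact sub_eq_zero.mp this

/-- Let `A ∈ Hom(W,W((x₂⁻¹))((x₁⁻¹)))`, `B ∈ Hom(W,W((x₁⁻¹))((x₂⁻¹)))`
and `C ∈ (Hom(W,W((x₂⁻¹))))((x₀))`, encoded by their coefficients (of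
`x₁^m x₂^n`, resp. `x₀^k x₂^l`). Then the Jacobi-type identity
`x₀⁻¹δ((x₁−x₂)/x₀)A − x₀⁻¹δ((x₂−x₁)/(−x₀))B = x₂⁻¹δ((x₁−x₀)/x₂)C`
(stated coefficientwise, at `x₀^c x₁^a x₂^b`) holds iff there are `k ∈ ℕ` and
`F ∈ Hom(W,W((x₁⁻¹,x₂⁻¹)))` with `(x₁−x₂)^k A = F = (x₁−x₂)^k B` and
`x₀^k C(x₂,x₀) = F(x₂+x₀,x₂)`. -/
theorem stmt_11 (W : Type) [AddCommGroup W] [Module ℂ W]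
    (A B C : ℤ → ℤ → Module.End ℂ W)
    (hA1 : ∀ w : W, ∃ M : ℤ, ∀ m : ℤ, M ≤ m → ∀ n : ℤ, A m n w = 0)
    (hA2 : ∀ (w : W) (m : ℤ), ∃ N : ℤ, ∀ n : ℤ, N ≤ n → A m n w = 0)
    (hB1 : ∀ w : W, ∃ N : ℤ, ∀ n : ℤ, N ≤ n → ∀ m : ℤ, B m n w = 0)
    (hB2 : ∀ (w : W) (n : ℤ), ∃ M : ℤ, ∀ m : ℤ, M ≤ m → B m n w = 0)
    (hC1 : ∃ k₀ : ℤ, ∀ k : ℤ, k < k₀ → ∀ l : ℤ, C k l = 0)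
    (hC2 : ∀ (k : ℤ) (w : W), ∃ L : ℤ, ∀ l : ℤ, L ≤ l → C k l w = 0) :
    (∀ (c a b : ℤ) (w : W),
      (∑ᶠ i : ℕ, (intBinom (-c - 1) i * (-1 : ℂ) ^ i) • A (a + c + 1 + i) (b - i) w)
        - (-1 : ℂ) ^ (c + 1) •
            (∑ᶠ i : ℕ, (intBinom (-c - 1) i * (-1 : ℂ) ^ i) • B (a - i) (b + c + 1 + i) w)
        = ∑ᶠ i : ℕ, (intBinom (a + i) i * (-1 : ℂ) ^ i) • C (c - i) (a + b + 1 + i) w)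
    ↔ ∃ (k : ℕ) (F : ℤ → ℤ → Module.End ℂ W),
        (∀ w : W, ∃ N : ℤ, ∀ m n : ℤ, (N ≤ m ∨ N ≤ n) → F m n w = 0) ∧
        (∀ (a b : ℤ) (w : W),
          (∑ j ∈ Finset.range (k + 1),
            ((k.choose j : ℂ) * (-1 : ℂ) ^ j) • A (a - k + j) (b - j) w) = F a b w) ∧
        (∀ (a b : ℤ) (w : W),
          (∑ j ∈ Finset.range (k + 1),
            ((k.choose j : ℂ) * (-1 : ℂ) ^ j) • B (a - k + j) (b - j) w) = F a b w) ∧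
        (∀ (c : ℕ) (l : ℤ) (w : W),
          C ((c : ℤ) - k) l w = ∑ᶠ m : ℤ, intBinom m c • F m (l + (c : ℤ) - m) w) ∧
        (∀ c : ℤ, c < 0 → ∀ l : ℤ, C (c - k) l = 0) := by
  constructor
  · intro hJ
    obtain ⟨k₀, hk₀⟩ := hC1
    set k : ℕ := (-k₀).toNat with hk
    have hkk : -k₀ ≤ ((k:ℕ):ℤ) := Int.self_le_toNat _
    set F : ℤ → ℤ → Module.End ℂ W := fun a b =>
      ∑ j ∈ Finset.range (k+1), ((k.choose j : ℂ) * (-1:ℂ)^j) • A (a - k + j) (b - j) with hFdef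
    have hFA : ∀ (a b : ℤ) (w : W),
        (∑ j ∈ Finset.range (k + 1),
          ((k.choose j : ℂ) * (-1 : ℂ) ^ j) • A (a - k + j) (b - j) w) = F a b w := by
      intro a b w
      rw [hFdef]
      simp only [LinearMap.sum_apply, LinearMap.smul_apply]
    -- sign fact
    have hsgn : (-1:ℂ)^(-(k:ℤ)) = (-1:ℂ)^(k:ℕ) := by
      rw [← zpow_natCast (-1:ℂ) k]
      exact neg_one_zpow_congr (by omega)
    -- claim (i): B-form of F
    have hFB : ∀ (a b : ℤ) (w : W),
        (∑ j ∈ Finset.range (k + 1),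
          ((k.choose j : ℂ) * (-1 : ℂ) ^ j) • B (a - k + j) (b - j) w) = F a b w := by
      intro a b w
      have h0 := hJ (-(k:ℤ)-1) a b w
      have ht3 : (∑ᶠ i : ℕ, (intBinom (a + i) i * (-1 : ℂ) ^ i) •
          C ((-(k:ℤ)-1) - i) (a + b + 1 + i) w) = 0 := by
        rw [finsum_congr (fun i => ?_), finsum_zero]
        rw [hk₀ ((-(k:ℤ)-1) - i) (by omega) (a+b+1+i)]
        simp
      have ht1 : (∑ᶠ i : ℕ, (intBinom (-(-(k:ℤ)-1) - 1) i * (-1 : ℂ) ^ i) •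
            A (a + (-(k:ℤ)-1) + 1 + i) (b - i) w)
          = ∑ i ∈ Finset.range (k+1), ((k.choose i : ℂ) * (-1:ℂ)^i) • A (a - k + i) (b - i) w := by
        rw [finsum_congr (fun i => ?_), finsum_nat_coeff k (fun i => A (a - (k:ℤ) + i) (b - i) w)]
        rw [show -(-(k:ℤ)-1) - 1 = (k:ℤ) by ring, show a + (-(k:ℤ)-1) + 1 + (i:ℤ) = a - k + i by ring]
      have ht2 : (∑ᶠ i : ℕ, (intBinom (-(-(k:ℤ)-1) - 1) i * (-1 : ℂ) ^ i) •
            B (a - i) (b + (-(k:ℤ)-1) + 1 + i) w)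
          = ∑ i ∈ Finset.range (k+1), ((k.choose i : ℂ) * (-1:ℂ)^i) • B (a - i) (b - k + i) w := by
        rw [finsum_congr (fun i => ?_), finsum_nat_coeff k (fun i => B (a - i) (b - (k:ℤ) + i) w)]
        rw [show -(-(k:ℤ)-1) - 1 = (k:ℤ) by ring, show b + (-(k:ℤ)-1) + 1 + (i:ℤ) = b - k + i by ring]
      rw [ht1, ht2, ht3, show (-(k:ℤ)-1) + 1 = -(k:ℤ) by ring, hsgn, sub_eq_zero] at h0
      have hrefl : ∑ i ∈ Finset.range (k+1), ((k.choose i : ℂ) * (-1:ℂ)^i) • B (a - i) (b - k + i) w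
          = (-1:ℂ)^(k:ℕ) • ∑ j ∈ Finset.range (k+1),
              ((k.choose j : ℂ) * (-1:ℂ)^j) • B (a - k + j) (b - j) w := by
        rw [Finset.smul_sum, ← Finset.sum_range_reflect
          (fun j => (-1:ℂ)^(k:ℕ) • (((k.choose j : ℂ) * (-1:ℂ)^j) • B (a - (k:ℤ) + j) (b - j) w)) (k+1)]
        refine Finset.sum_congr rfl fun j hj => ?_
        have hjk : j ≤ k := by simpa using Nat.lt_succ_iff.mp (Finset.mem_range.mp hj)
        have hr1 : k + 1 - 1 - j = k - j := by omega
        rw [hr1, smul_smul, Nat.choose_symm hjk]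
        have h2 : ((-1:ℂ))^(k-j) * (-1:ℂ)^j = (-1:ℂ)^(k:ℕ) := by
          rw [← pow_add, Nat.sub_add_cancel hjk]
        have h4 : ((-1:ℂ))^(k:ℕ) * (-1:ℂ)^(k-j) = (-1:ℂ)^j := by
          rw [← h2, show ((-1:ℂ))^(k-j) * (-1:ℂ)^j * (-1:ℂ)^(k-j)
            = ((-1:ℂ)^(k-j) * (-1:ℂ)^(k-j)) * (-1:ℂ)^j from by ring, ← mul_pow]
          norm_num
        congr 1
        · rw [← h4]; ring
        · congr 1 <;> push_cast [Nat.cast_sub hjk] <;> ring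
      rw [← hFA a b w, h0, hrefl, smul_smul, ← mul_pow]
      norm_num
    -- truncation of F
    have hFt : ∀ w : W, ∃ N : ℤ, ∀ m n : ℤ, (N ≤ m ∨ N ≤ n) → F m n w = 0 := by
      intro w
      obtain ⟨MA, hMA⟩ := hA1 w
      obtain ⟨NB, hNB⟩ := hB1 w
      refine ⟨max (MA + k) (NB + k), fun m n hmn => ?_⟩
      rcases hmn with hm | hn
      · rw [← hFA m n w]
        refine Finset.sum_eq_zero fun j _ => ?_
        rw [hMA (m - k + j) (by omega) (n - j), smul_zero]
      · rw [← hFB m n w]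
        refine Finset.sum_eq_zero fun j hj => ?_
        have hjk : j ≤ k := by simpa using Nat.lt_succ_iff.mp (Finset.mem_range.mp hj)
        rw [hNB (n - j) (by omega) (m - k + j), smul_zero]
    refine ⟨k, F, hFt, hFA, hFB, ?_, ?_⟩
    · -- bullet 4 via forward_C4
      intro c l w
      obtain ⟨MA, hMA⟩ := hA1 w
      obtain ⟨NB, hNB⟩ := hB1 w
      have h := forward_C4 (fun m n => A m n w) (fun m n => B m n w)
        (fun m n => C m n w) (fun m n => F m n w) k
        ⟨MA, fun m n hm => hMA m hm n⟩
        ⟨NB, fun m n hn => hNB n hn m⟩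
        (hFt w)
        (fun a b => hFA a b w)
        (fun a b => hFB a b w)
        (fun c' hc' l' => by show C (c' - (k:ℤ)) l' w = 0; rw [hk₀ (c' - k) (by omega) l']; simp)
        (fun c' a' b' => hJ c' a' b' w)
        (c : ℤ) l
      rw [if_pos (by positivity)] at h
      rw [h]
      norm_num
    · intro c hc l
      exact hk₀ (c - k) (by omega) l
  · rintro ⟨k, F, hFt, hFA, hFB, hC4, hC5⟩
    intro c a b w
    obtain ⟨MA, hMA⟩ := hA1 w
    obtain ⟨NB, hNB⟩ := hB1 w
    exact backward_pt (fun m n => A m n w) (fun m n => B m n w)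
      (fun m n => C m n w) (fun m n => F m n w) k
      ⟨MA, fun m n hm => hMA m hm n⟩
      ⟨NB, fun m n hn => hNB n hn m⟩
      (hFt w)
      (fun a' b' => hFA a' b' w)
      (fun a' b' => hFB a' b' w)
      (fun c' l' => hC4 c' l' w)
      (fun c' hc' l' => by show C (c' - (k:ℤ)) l' w = 0; rw [hC5 c' hc' l']; simp)
      c a b
end

section
/- Let g(z) = g₀z + g₁ be an affine transformation of ℂ with g₀ ≠ 0. Then for formal variables x and t, x⁻¹ δ(g⁻¹(t)/x) = g₀ · t⁻¹ δ(g(x)/t), where δ(z) = Σ_{n∈ℤ} zⁿ and g⁻¹(t) = g₀⁻¹(t − g₁), with negative powers of (t − g₁) and (g₀x + g₁) expanded in nonnegative powers of g₁. -/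
lemma intBinom_reflect (n : ℤ) (k : ℕ) :
    intBinom ((k : ℤ) - n - 1) k = (-1 : ℂ) ^ k * intBinom n k := by
  unfold intBinom
  rw [← mul_div_assoc]
  congr 1
  have h1 : ∀ j ∈ Finset.range k, (((k : ℤ) - n - 1 : ℤ) : ℂ) - j
      = (fun j : ℕ => ((j : ℂ) - (n : ℂ))) (k - 1 - j) := by
    intro j hj
    simp only []
    have hj' : j < k := Finset.mem_range.mp hj
    have : ((k - 1 - j : ℕ) : ℂ) = (k : ℂ) - 1 - (j : ℂ) := by
      have : (k - 1 - j : ℕ) = k - (1 + j) := by omega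
      rw [this, Nat.cast_sub (by omega)]
      push_cast; ring
    rw [this]; push_cast; ring
  rw [Finset.prod_congr rfl h1, Finset.prod_range_reflect (fun j : ℕ => (j:ℂ) - n) k]
  rw [show ((-1 : ℂ) ^ k) = ∏ _j ∈ Finset.range k, (-1 : ℂ) by
    rw [Finset.prod_const, Finset.card_range]]
  rw [← Finset.prod_mul_distrib]
  exact Finset.prod_congr rfl fun j _ => by ring

theorem stmt_17 (g₀ g₁ : ℂ) (hg : g₀ ≠ 0) : ∀ a b : ℤ,
    (if 0 ≤ (-b - 1) - a then
        g₀ ^ (-(-b - 1)) * intBinom (-b - 1) ((-b - 1 - a).toNat)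
          * (-g₁) ^ ((-b - 1 - a).toNat)
      else 0)
    = (if 0 ≤ (-a - 1) - b then
        g₀ * intBinom (-a - 1) ((-a - 1 - b).toNat) * g₀ ^ b
          * g₁ ^ ((-a - 1 - b).toNat)
      else 0) := by
  intro a b
  have hc : (-b - 1) - a = (-a - 1) - b := by ring
  by_cases h : 0 ≤ (-b - 1) - a
  · rw [if_pos h, if_pos (hc ▸ h)]
    set k : ℕ := ((-b - 1) - a).toNat with hk
    have hk2 : ((-a - 1) - b).toNat = k := by rw [hk]; omega
    have hkc : (k : ℤ) = -b - 1 - a := Int.toNat_of_nonneg h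
    have hm : (-a - 1 : ℤ) = (k : ℤ) - (-b - 1) - 1 := by rw [hkc]; ring
    rw [hk2, hm, intBinom_reflect]
    have hz : g₀ ^ (-(-b - 1)) = g₀ * g₀ ^ b := by
      rw [show (-(-b - 1)) = 1 + b by ring, zpow_add₀ hg, zpow_one]
    rw [hz, neg_pow]
    ring
  · rw [if_neg h, if_neg (fun h' => h (hc ▸ h'))]
end
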